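/- arXiv:math/0602544 — 2 statements merged into one kernel-verified Lean document; each statement's English description precedes it below -/
import Mathlib

section
/- If λx.M ⇒_E N, then for each i ∈ {1,2} there exists a term Q such that πᵢN →_R* λx.πᵢQ and M ⇒_E Q. -/
/-- Untyped lambda terms with pairing and projections, de Bruijn representation
(so terms are automatically identified up to alpha-equivalence). -/
inductive Tm : Type
  | var : Nat → Tm
  | app : Tm → Tm → Tm
  | lam : Tm → Tm
  | pair : Tm → Tm → Tm
  | p1 : Tm → Tm
  | p2 : Tm → Tm

/-- Shift free de Bruijn indices ≥ d up by one. -/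
def Tm.lift (d : Nat) : Tm → Tm
  | .var n => if n < d then .var n else .var (n + 1)
  | .app a b => .app (a.lift d) (b.lift d)
  | .lam a => .lam (a.lift (d + 1))
  | .pair a b => .pair (a.lift d) (b.lift d)
  | .p1 a => .p1 (a.lift d)
  | .p2 a => .p2 (a.lift d)

/-- Capture-avoiding substitution of s for variable k. -/
def Tm.subst : Tm → Nat → Tm → Tm
  | .var n, k, s => if n = k then s else if n < k then .var n else .var (n - 1)
  | .app a b, k, s => .app (a.subst k s) (b.subst k s)
  | .lam a, k, s => .lam (a.subst (k + 1) (s.lift 0))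
  | .pair a b, k, s => .pair (a.subst k s) (b.subst k s)
  | .p1 a, k, s => .p1 (a.subst k s)
  | .p2 a, k, s => .p2 (a.subst k s)

/-- One-step R-reduction: compatible closure of (β), (π₁), (π₂), (δπ), (π₁λ), (π₂λ). -/
inductive StepR : Tm → Tm → Prop
  | beta {M N} : StepR (.app (.lam M) N) (M.subst 0 N)
  | pi1 {M N} : StepR (.p1 (.pair M N)) M
  | pi2 {M N} : StepR (.p2 (.pair M N)) N
  | dpi {M N P} : StepR (.app (.pair M N) P) (.pair (.app M P) (.app N P))
  | pi1lam {M} : StepR (.p1 (.lam M)) (.lam (.p1 M))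
  | pi2lam {M} : StepR (.p2 (.lam M)) (.lam (.p2 M))
  | lam {M M'} : StepR M M' → StepR (.lam M) (.lam M')
  | appL {M M' N} : StepR M M' → StepR (.app M N) (.app M' N)
  | appR {M N N'} : StepR N N' → StepR (.app M N) (.app M N')
  | pairL {M M' N} : StepR M M' → StepR (.pair M N) (.pair M' N)
  | pairR {M N N'} : StepR N N' → StepR (.pair M N) (.pair M N')
  | p1 {M M'} : StepR M M' → StepR (.p1 M) (.p1 M')
  | p2 {M M'} : StepR M M' → StepR (.p2 M) (.p2 M')

/-- Parallel η/SP-expansion. -/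
inductive ParE : Tm → Tm → Prop
  | refl {M} : ParE M M
  | lam {M M'} : ParE M M' → ParE (.lam M) (.lam M')
  | app {M M' N N'} : ParE M M' → ParE N N' → ParE (.app M N) (.app M' N')
  | pair {M M' N N'} : ParE M M' → ParE N N' → ParE (.pair M N) (.pair M' N')
  | p1 {M M'} : ParE M M' → ParE (.p1 M) (.p1 M')
  | p2 {M M'} : ParE M M' → ParE (.p2 M) (.p2 M')
  | eta {M M'} : ParE M M' → ParE M (.lam (.app (M'.lift 0) (.var 0)))
  | sp {M M'} : ParE M M' → ParE M (.pair (.p1 M') (.p2 M'))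

/-! Induct on `λx.M ⇒_E N`, proving simultaneously that each `πᵢN` reduces to `λx.πᵢQ` and
that `N x` reduces to `Q`, for some `Q` with `M ⇒_E Q` (the two `Q`s may differ); in de Bruijn
form `N x` is `app (N.lift 0) (var 0)`.
An η-expansion `λy.N' y` is undone by (πᵢλ) followed by a β-step, and feeds the second claim back
into the first; an SP-expansion `⟨π₁N', π₂N'⟩` is undone by (πᵢ), and for the second claim (δπ)
distributes `x` over the pair, so `N x` reduces to `⟨π₁Q, π₂Q⟩`, an SP-expansion of `Q`. -/

open Relation

local infix:50 " →ᵣ* " => ReflTransGen StepR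

namespace Tm

theorem lift_lift (s : Tm) {i j : Nat} (hij : i ≤ j) :
    (s.lift j).lift i = (s.lift i).lift (j + 1) := by
  induction s generalizing i j with
  | var n =>
    simp only [lift]
    split_ifs <;> simp only [lift] <;> split_ifs <;> first | rfl | omega
  | lam a ih => simp [lift, ih (Nat.succ_le_succ hij)]
  | app a b iha ihb => simp [lift, iha hij, ihb hij]
  | pair a b iha ihb => simp [lift, iha hij, ihb hij]
  | p1 a ih => simp [lift, ih hij]
  | p2 a ih => simp [lift, ih hij]

theorem lift_subst (P s : Tm) {j d : Nat} (hjd : j ≤ d) :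
    (P.subst j s).lift d = (P.lift (d + 1)).subst j (s.lift d) := by
  induction P generalizing s j d with
  | var n =>
    simp only [subst, lift]
    split_ifs <;> simp only [lift, subst] <;> split_ifs <;>
      first | rfl | omega | (congr 1; omega)
  | lam a ih => simp [subst, lift, ih _ (Nat.succ_le_succ hjd), lift_lift s (Nat.zero_le d)]
  | app a b iha ihb => simp [subst, lift, iha _ hjd, ihb _ hjd]
  | pair a b iha ihb => simp [subst, lift, iha _ hjd, ihb _ hjd]
  | p1 a ih => simp [subst, lift, ih _ hjd]
  | p2 a ih => simp [subst, lift, ih _ hjd]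

theorem subst_var_lift_succ (t : Tm) (d : Nat) : (t.lift (d + 1)).subst d (.var d) = t := by
  induction t generalizing d with
  | var n =>
    simp only [lift]
    split_ifs <;> simp only [subst] <;> split_ifs <;> first | rfl | omega | (congr 1; omega)
  | lam a ih => simpa [lift, subst] using ih (d + 1)
  | app a b iha ihb => simp [lift, subst, iha, ihb]
  | pair a b iha ihb => simp [lift, subst, iha, ihb]
  | p1 a ih => simp [lift, subst, ih]
  | p2 a ih => simp [lift, subst, ih]

end Tm

namespace StepR

theorem lift {a b : Tm} (h : StepR a b) (d : Nat) : StepR (a.lift d) (b.lift d) := by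
  induction h generalizing d with
  | @beta P Q =>
    simpa [Tm.lift, Tm.lift_subst P Q (Nat.zero_le d)] using @beta (P.lift (d + 1)) (Q.lift d)
  | pi1 => exact pi1
  | pi2 => exact pi2
  | dpi => exact dpi
  | pi1lam => exact pi1lam
  | pi2lam => exact pi2lam
  | lam _ ih => exact lam (ih (d + 1))
  | appL _ ih => exact appL (ih d)
  | appR _ ih => exact appR (ih d)
  | pairL _ ih => exact pairL (ih d)
  | pairR _ ih => exact pairR (ih d)
  | p1 _ ih => exact p1 (ih d)
  | p2 _ ih => exact p2 (ih d)

theorem beta_lift_var (P : Tm) : StepR (.app (.lam (P.lift 1)) (.var 0)) P := by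
  simpa [Tm.subst_var_lift_succ] using @beta (P.lift 1) (.var 0)

end StepR

theorem app_lift_var_reduces_of_reduces_lam {P R : Tm} (h : P →ᵣ* .lam R) :
    Tm.app (P.lift 0) (.var 0) →ᵣ* R := by
  have h' : P.lift 0 →ᵣ* .lam (R.lift 1) := h.lift (Tm.lift 0) fun _ _ hs => hs.lift 0
  exact (h'.lift (Tm.app · (.var 0)) fun _ _ => StepR.appL).tail (StepR.beta_lift_var R)

theorem ParE.reduces_of_lam {M L N : Tm} (h : ParE L N) (hL : L = .lam M) :
    (∃ Q, ParE M Q ∧ Tm.p1 N →ᵣ* .lam (.p1 Q) ∧ Tm.p2 N →ᵣ* .lam (.p2 Q)) ∧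
    (∃ Q, ParE M Q ∧ Tm.app (N.lift 0) (.var 0) →ᵣ* Q) := by
  have of_lam {P} (hP : ParE M P) :
      (∃ Q, ParE M Q ∧ Tm.p1 (.lam P) →ᵣ* .lam (.p1 Q) ∧ Tm.p2 (.lam P) →ᵣ* .lam (.p2 Q)) ∧
      (∃ Q, ParE M Q ∧ Tm.app ((Tm.lam P).lift 0) (.var 0) →ᵣ* Q) :=
    ⟨⟨P, hP, .single .pi1lam, .single .pi2lam⟩,
      ⟨P, hP, app_lift_var_reduces_of_reduces_lam .refl⟩⟩
  induction h with
  | refl => subst hL; exact of_lam .refl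
  | lam hP => cases hL; exact of_lam hP
  | app | pair | p1 | p2 => cases hL
  | @eta _ N' _ ih =>
    obtain ⟨-, Q, hQ, happ⟩ := ih hL
    have hη : Tm.app ((Tm.lam (.app (N'.lift 0) (.var 0))).lift 0) (.var 0) →ᵣ*
        .app (N'.lift 0) (.var 0) :=
      app_lift_var_reduces_of_reduces_lam .refl
    refine ⟨⟨Q, hQ, ?_, ?_⟩, ⟨Q, hQ, hη.trans happ⟩⟩
    · exact .head .pi1lam
        (happ.lift (fun t => Tm.lam (.p1 t)) fun _ _ hs => StepR.lam (.p1 hs))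
    · exact .head .pi2lam
        (happ.lift (fun t => Tm.lam (.p2 t)) fun _ _ hs => StepR.lam (.p2 hs))
  | @sp _ N' _ ih =>
    obtain ⟨⟨Q, hQ, h1, h2⟩, -⟩ := ih hL
    have happ1 := app_lift_var_reduces_of_reduces_lam h1
    have happ2 := app_lift_var_reduces_of_reduces_lam h2
    refine ⟨⟨Q, hQ, .head .pi1 h1, .head .pi2 h2⟩,
      ⟨.pair (.p1 Q) (.p2 Q), .sp hQ, .head .dpi ?_⟩⟩
    exact (happ1.lift (Tm.pair · _) fun _ _ => StepR.pairL).trans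
      (happ2.lift (Tm.pair _ ·) fun _ _ => StepR.pairR)

/-- If λx.M ⇒_E N then for each i ∈ {1,2} there is Q with πᵢN →_R* λx.πᵢQ and M ⇒_E Q. -/
theorem parE_lam_proj (M N : Tm) (h : ParE (.lam M) N) :
    (∃ Q, Relation.ReflTransGen StepR (.p1 N) (.lam (.p1 Q)) ∧ ParE M Q) ∧
    (∃ Q, Relation.ReflTransGen StepR (.p2 N) (.lam (.p2 Q)) ∧ ParE M Q) := by
  obtain ⟨⟨Q, hQ, h1, h2⟩, -⟩ := h.reduces_of_lam rfl
  exact ⟨⟨Q, h1, hQ⟩, ⟨Q, h2, hQ⟩⟩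
end

section
/- The reduction relation →_FP, the compatible closure of the axioms (β), (η̄): M ▷ λx.(M x) for x ∉ FV(M), (π₁), (π₂), (S̄P): M ▷ ⟨π₁M, π₂M⟩, (δπ): ⟨M,N⟩P ▷ ⟨M P, N P⟩, (π₁λ): π₁(λx.M) ▷ λx.π₁M, and (π₂λ): π₂(λx.M) ▷ λx.π₂M, is confluent. -/
/-- One-step FP-reduction: compatible closure of (β), (η̄), (π₁), (π₂), (S̄P), (δπ), (π₁λ), (π₂λ). -/
inductive StepFP : Tm → Tm → Prop
  | beta {M N} : StepFP (.app (.lam M) N) (M.subst 0 N)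
  | eta {M} : StepFP M (.lam (.app (M.lift 0) (.var 0)))
  | pi1 {M N} : StepFP (.p1 (.pair M N)) M
  | pi2 {M N} : StepFP (.p2 (.pair M N)) N
  | sp {M} : StepFP M (.pair (.p1 M) (.p2 M))
  | dpi {M N P} : StepFP (.app (.pair M N) P) (.pair (.app M P) (.app N P))
  | pi1lam {M} : StepFP (.p1 (.lam M)) (.lam (.p1 M))
  | pi2lam {M} : StepFP (.p2 (.lam M)) (.lam (.p2 M))
  | lam {M M'} : StepFP M M' → StepFP (.lam M) (.lam M')
  | appL {M M' N} : StepFP M M' → StepFP (.app M N) (.app M' N)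
  | appR {M N N'} : StepFP N N' → StepFP (.app M N) (.app M N')
  | pairL {M M' N} : StepFP M M' → StepFP (.pair M N) (.pair M' N)
  | pairR {M N N'} : StepFP N N' → StepFP (.pair M N) (.pair M N')
  | p1 {M M'} : StepFP M M' → StepFP (.p1 M) (.p1 M')
  | p2 {M M'} : StepFP M M' → StepFP (.p2 M) (.p2 M')

namespace Relation

variable {α : Type*} {r s t : α → α → Prop}

theorem ReflTransGen.commute_strip (h : ∀ a b c, r a b → s a c → ∃ d, s b d ∧ ReflTransGen r c d)
    {a b c : α} (hab : ReflTransGen r a b) (hac : s a c) : ∃ d, s b d ∧ ReflTransGen r c d := by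
  induction hab generalizing c with
  | refl => exact ⟨c, hac, .refl⟩
  | tail _ hxb ih =>
    obtain ⟨e, hxe, hce⟩ := ih hac
    obtain ⟨d, hbd, hed⟩ := h _ _ _ hxb hxe
    exact ⟨d, hbd, hce.trans hed⟩

theorem ReflTransGen.commute (h : ∀ a b c, r a b → s a c → ∃ d, s b d ∧ ReflTransGen r c d)
    {a b c : α} (hab : ReflTransGen r a b) (hac : ReflTransGen s a c) :
    ∃ d, ReflTransGen s b d ∧ ReflTransGen r c d := by
  induction hac with
  | refl => exact ⟨b, .refl, hab⟩
  | tail _ hxc ih =>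
    obtain ⟨e, hbe, hxe⟩ := ih
    obtain ⟨d, hed, hcd⟩ := ReflTransGen.commute_strip h hxe hxc
    exact ⟨d, hbe.tail hed, hcd⟩

theorem join_reflTransGen_of_diamond (h : ∀ a b c, r a b → r a c → Join r b c) {a b c : α}
    (hab : ReflTransGen r a b) (hac : ReflTransGen r a c) : Join (ReflTransGen r) b c :=
  church_rosser (fun a b c hb hc ↦
    let ⟨d, hbd, hcd⟩ := h a b c hb hc; ⟨d, .single hbd, .single hcd⟩) hab hac

theorem join_reflTransGen_of_commute (hr : ∀ a b c, r a b → r a c → Join r b c)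
    (hs : ∀ a b c, s a b → s a c → Join s b c)
    (hrs : ∀ a b c, r a b → s a c → ∃ d, s b d ∧ ReflTransGen r c d)
    (ht : ∀ a b, t a b → r a b ∨ s a b)
    (hrt : ∀ a b, r a b → ReflTransGen t a b) (hst : ∀ a b, s a b → ReflTransGen t a b)
    {a b c : α} (hab : ReflTransGen t a b) (hac : ReflTransGen t a c) :
    Join (ReflTransGen t) b c := by
  let w a b := ∃ x, ReflTransGen r a x ∧ ReflTransGen s x b
  have hw : ∀ a b c, w a b → w a c → Join w b c := by
    rintro a b c ⟨x, hax, hxb⟩ ⟨y, hay, hyc⟩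
    obtain ⟨z, hxz, hyz⟩ := join_reflTransGen_of_diamond hr hax hay
    obtain ⟨u, hzu, hbu⟩ := ReflTransGen.commute hrs hxz hxb
    obtain ⟨v, hzv, hcv⟩ := ReflTransGen.commute hrs hyz hyc
    obtain ⟨p, hup, hvp⟩ := join_reflTransGen_of_diamond hs hzu hzv
    exact ⟨p, ⟨u, hbu, hup⟩, ⟨v, hcv, hvp⟩⟩
  have htw : ReflTransGen t ≤ ReflTransGen w := ReflTransGen.mono fun a b hab ↦
    (ht a b hab).elim (fun h ↦ ⟨b, .single h, .refl⟩) (fun h ↦ ⟨a, .refl, .single h⟩)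
  have hwt : ReflTransGen w ≤ ReflTransGen t := reflTransGen_closed fun a b ⟨x, hax, hxb⟩ ↦
    (reflTransGen_closed hrt a x hax).trans (reflTransGen_closed hst x b hxb)
  obtain ⟨d, hbd, hcd⟩ := join_reflTransGen_of_diamond hw (htw a b hab) (htw a c hac)
  exact ⟨d, hwt b d hbd, hwt c d hcd⟩

end Relation

namespace Tm

theorem lift_lift_s13 (M : Tm) {k d : ℕ} (h : k ≤ d) :
    (M.lift k).lift (d + 1) = (M.lift d).lift k := by
  induction M generalizing k d with
  | var => grind [lift]
  | lam _ ih => simp only [lift, ih (Nat.succ_le_succ h)]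
  | _ => simp_all [lift]

theorem subst_lift (M N : Tm) (k : ℕ) : (M.lift k).subst k N = M := by
  induction M generalizing k N with
  | var => grind [lift, subst]
  | _ => simp_all [lift, subst]

theorem lift_subst_of_le (M N : Tm) {d k : ℕ} (h : d ≤ k) :
    (M.subst k N).lift d = (M.lift d).subst (k + 1) (N.lift d) := by
  induction M generalizing N d k with
  | var => grind [lift, subst]
  | lam _ ih => simp only [lift, subst, ih _ (Nat.succ_le_succ h), lift_lift_s13 N (Nat.zero_le d)]
  | _ => simp_all [lift, subst]

theorem lift_subst_of_ge (M N : Tm) {d k : ℕ} (h : k ≤ d) :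
    (M.subst k N).lift d = (M.lift (d + 1)).subst k (N.lift d) := by
  induction M generalizing N d k with
  | var => grind [lift, subst]
  | lam _ ih => simp only [lift, subst, ih _ (Nat.succ_le_succ h), lift_lift_s13 N (Nat.zero_le d)]
  | _ => simp_all [lift, subst]

theorem subst_subst (M N P : Tm) {k d : ℕ} (h : k ≤ d) :
    (M.subst k N).subst d P = (M.subst (d + 1) (P.lift k)).subst k (N.subst d P) := by
  induction M generalizing N P k d with
  | var => grind [subst, subst_lift]
  | lam _ ih =>
    simp only [subst, ih _ _ (Nat.succ_le_succ h), lift_lift_s13 P (Nat.zero_le k),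
      lift_subst_of_le N P (Nat.zero_le d)]
  | _ => simp_all [subst]

theorem subst_lift_succ_var (M : Tm) (k : ℕ) : (M.lift (k + 1)).subst k (var k) = M := by
  induction M generalizing k with
  | var => grind [lift, subst]
  | _ => simp_all [lift, subst]

end Tm

open Relation

/-- Parallel reduction for the contraction rules (β), (π₁), (π₂), (δπ), (π₁λ), (π₂λ). -/
inductive ParB : Tm → Tm → Prop
  | var {n} : ParB (.var n) (.var n)
  | app {M M' N N'} : ParB M M' → ParB N N' → ParB (.app M N) (.app M' N')
  | lam {M M'} : ParB M M' → ParB (.lam M) (.lam M')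
  | pair {M M' N N'} : ParB M M' → ParB N N' → ParB (.pair M N) (.pair M' N')
  | p1 {M M'} : ParB M M' → ParB (.p1 M) (.p1 M')
  | p2 {M M'} : ParB M M' → ParB (.p2 M) (.p2 M')
  | beta {A A' C C'} : ParB A A' → ParB C C' → ParB (.app (.lam A) C) (A'.subst 0 C')
  | pi1 {U U' V} : ParB U U' → ParB (.p1 (.pair U V)) U'
  | pi2 {U V V'} : ParB V V' → ParB (.p2 (.pair U V)) V'
  | dpi {U U' V V' W W'} : ParB U U' → ParB V V' → ParB W W' →
      ParB (.app (.pair U V) W) (.pair (.app U' W') (.app V' W'))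
  | pi1lam {A A'} : ParB A A' → ParB (.p1 (.lam A)) (.lam (.p1 A'))
  | pi2lam {A A'} : ParB A A' → ParB (.p2 (.lam A)) (.lam (.p2 A'))

namespace ParB

theorem refl : ∀ M, ParB M M
  | .var _ => var
  | .app M N => app (refl M) (refl N)
  | .lam M => lam (refl M)
  | .pair M N => pair (refl M) (refl N)
  | .p1 M => p1 (refl M)
  | .p2 M => p2 (refl M)

theorem lift {M N : Tm} (h : ParB M N) (d : ℕ) : ParB (M.lift d) (N.lift d) := by
  induction h generalizing d with
  | var => simp only [Tm.lift]; split <;> exact var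
  | @beta A A' C C' _ _ ihA ihC =>
    rw [Tm.lift_subst_of_ge A' C' (Nat.zero_le d)]
    exact beta (ihA (d + 1)) (ihC d)
  | app _ _ ihM ihN => exact app (ihM d) (ihN d)
  | lam _ ih => exact lam (ih (d + 1))
  | pair _ _ ihM ihN => exact pair (ihM d) (ihN d)
  | p1 _ ih => exact p1 (ih d)
  | p2 _ ih => exact p2 (ih d)
  | pi1 _ ih => exact pi1 (ih d)
  | pi2 _ ih => exact pi2 (ih d)
  | dpi _ _ _ ihU ihV ihW => exact dpi (ihU d) (ihV d) (ihW d)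
  | pi1lam _ ih => exact pi1lam (ih (d + 1))
  | pi2lam _ ih => exact pi2lam (ih (d + 1))

theorem subst {M M' N N' : Tm} (h : ParB M M') (hN : ParB N N') (k : ℕ) :
    ParB (M.subst k N) (M'.subst k N') := by
  induction h generalizing N N' k with
  | var => simp only [Tm.subst]; split_ifs <;> first | exact hN | exact var
  | @beta A A' C C' _ _ ihA ihC =>
    rw [Tm.subst, Tm.subst_subst A' C' N' (Nat.zero_le k)]
    exact beta (ihA (hN.lift 0) (k + 1)) (ihC hN k)
  | app _ _ ihM ihN => exact app (ihM hN k) (ihN hN k)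
  | lam _ ih => exact lam (ih (hN.lift 0) (k + 1))
  | pair _ _ ihM ihN => exact pair (ihM hN k) (ihN hN k)
  | p1 _ ih => exact p1 (ih hN k)
  | p2 _ ih => exact p2 (ih hN k)
  | pi1 _ ih => exact pi1 (ih hN k)
  | pi2 _ ih => exact pi2 (ih hN k)
  | dpi _ _ _ ihU ihV ihW => exact dpi (ihU hN k) (ihV hN k) (ihW hN k)
  | pi1lam _ ih => exact pi1lam (ih (hN.lift 0) (k + 1))
  | pi2lam _ ih => exact pi2lam (ih (hN.lift 0) (k + 1))

end ParB

/-- Takahashi's complete development: contracts every B-redex of the term at once. -/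
def Tm.developB : Tm → Tm
  | .var n => .var n
  | .lam A => .lam A.developB
  | .pair U V => .pair U.developB V.developB
  | .app (.lam A) C => A.developB.subst 0 C.developB
  | .app (.pair U V) W => .pair (.app U.developB W.developB) (.app V.developB W.developB)
  | .app F C => .app F.developB C.developB
  | .p1 (.pair U _) => U.developB
  | .p1 (.lam A) => .lam (.p1 A.developB)
  | .p1 F => .p1 F.developB
  | .p2 (.pair _ V) => V.developB
  | .p2 (.lam A) => .lam (.p2 A.developB)
  | .p2 F => .p2 F.developB

namespace ParB

theorem to_developB {M N : Tm} (h : ParB M N) : ParB N M.developB := by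
  induction h with
  | var => exact var
  | @app F F' C C' hF _ ihF ihC =>
    cases hF with
    | lam => cases ihF with | lam ihA => exact beta ihA ihC
    | pair => cases ihF with | pair ihU ihV => exact dpi ihU ihV ihC
    | _ => exact app ihF ihC
  | lam _ ih => exact lam ih
  | pair _ _ ihM ihN => exact pair ihM ihN
  | @p1 F F' hF ihF =>
    cases hF with
    | lam => cases ihF with | lam ihA => exact pi1lam ihA
    | pair => cases ihF with | pair ihU _ => exact pi1 ihU
    | _ => exact p1 ihF
  | @p2 F F' hF ihF =>
    cases hF with
    | lam => cases ihF with | lam ihA => exact pi2lam ihA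
    | pair => cases ihF with | pair _ ihV => exact pi2 ihV
    | _ => exact p2 ihF
  | beta _ _ ihA ihC => exact ihA.subst ihC 0
  | pi1 _ ih => exact ih
  | pi2 _ ih => exact ih
  | dpi _ _ _ ihU ihV ihW => exact pair (app ihU ihW) (app ihV ihW)
  | pi1lam _ ih => exact lam (p1 ih)
  | pi2lam _ ih => exact lam (p2 ih)

theorem diamond {M N₁ N₂ : Tm} (h₁ : ParB M N₁) (h₂ : ParB M N₂) : Join ParB N₁ N₂ :=
  ⟨M.developB, h₁.to_developB, h₂.to_developB⟩

end ParB

def Tm.etaExpand (M : Tm) : Tm := .lam (.app (M.lift 0) (.var 0))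

def Tm.spExpand (M : Tm) : Tm := .pair (.p1 M) (.p2 M)

theorem Tm.etaExpand_lift (M : Tm) (d : ℕ) : M.etaExpand.lift d = (M.lift d).etaExpand := by
  simp only [etaExpand, lift, Nat.zero_lt_succ, ite_true, lift_lift_s13 M (Nat.zero_le d)]

theorem Tm.etaExpand_subst (M N : Tm) (k : ℕ) :
    M.etaExpand.subst k N = (M.subst k N).etaExpand := by
  simp only [etaExpand, subst, Nat.zero_ne_add_one, Nat.zero_lt_succ, ite_true, ite_false,
    lift_subst_of_le M N (Nat.zero_le k)]

theorem Tm.subst_etaExpand_body (M N : Tm) : (app (M.lift 0) (var 0)).subst 0 N = app M N := by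
  simp only [subst, subst_lift, ite_true]

/-- Parallel reduction for the expansion rules (η̄) and (S̄P). -/
inductive ParE_s13 : Tm → Tm → Prop
  | var {n} : ParE_s13 (.var n) (.var n)
  | app {M M' N N'} : ParE_s13 M M' → ParE_s13 N N' → ParE_s13 (.app M N) (.app M' N')
  | lam {M M'} : ParE_s13 M M' → ParE_s13 (.lam M) (.lam M')
  | pair {M M' N N'} : ParE_s13 M M' → ParE_s13 N N' → ParE_s13 (.pair M N) (.pair M' N')
  | p1 {M M'} : ParE_s13 M M' → ParE_s13 (.p1 M) (.p1 M')
  | p2 {M M'} : ParE_s13 M M' → ParE_s13 (.p2 M) (.p2 M')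
  | eta {M M'} : ParE_s13 M M' → ParE_s13 M M'.etaExpand
  | sp {M M'} : ParE_s13 M M' → ParE_s13 M M'.spExpand

/-- The congruence rules of `ParE` alone: every `ParE` step is one of these followed by a stack
of expansions (`ParE.exists_wrap`). -/
inductive ParECong : Tm → Tm → Prop
  | var {n} : ParECong (.var n) (.var n)
  | app {M M' N N'} : ParE_s13 M M' → ParE_s13 N N' → ParECong (.app M N) (.app M' N')
  | lam {M M'} : ParE_s13 M M' → ParECong (.lam M) (.lam M')
  | pair {M M' N N'} : ParE_s13 M M' → ParE_s13 N N' → ParECong (.pair M N) (.pair M' N')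
  | p1 {M M'} : ParE_s13 M M' → ParECong (.p1 M) (.p1 M')
  | p2 {M M'} : ParE_s13 M M' → ParECong (.p2 M) (.p2 M')

/-- `wrap s M` expands `M` by the list `s` of expansions, the head of `s` outermost:
`true` stands for (η̄) and `false` for (S̄P). -/
def Tm.wrap : List Bool → Tm → Tm
  | [], M => M
  | true :: s, M => (wrap s M).etaExpand
  | false :: s, M => (wrap s M).spExpand

theorem Tm.wrap_lift_zero (s : List Bool) (M : Tm) : (M.wrap s).lift 0 = (M.lift 0).wrap s := by
  induction s with
  | nil => rfl
  | cons b s ih =>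
    cases b <;> simp only [wrap, spExpand, lift, etaExpand_lift, ih]

namespace ParE_s13

theorem refl : ∀ M, ParE_s13 M M
  | .var _ => var
  | .app M N => app (refl M) (refl N)
  | .lam M => lam (refl M)
  | .pair M N => pair (refl M) (refl N)
  | .p1 M => p1 (refl M)
  | .p2 M => p2 (refl M)

theorem lift {M N : Tm} (h : ParE_s13 M N) (d : ℕ) : ParE_s13 (M.lift d) (N.lift d) := by
  induction h generalizing d with
  | var => simp only [Tm.lift]; split <;> exact var
  | eta _ ih => rw [Tm.etaExpand_lift]; exact eta (ih d)
  | app _ _ ihM ihN => exact app (ihM d) (ihN d)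
  | lam _ ih => exact lam (ih (d + 1))
  | pair _ _ ihM ihN => exact pair (ihM d) (ihN d)
  | p1 _ ih => exact p1 (ih d)
  | p2 _ ih => exact p2 (ih d)
  | sp _ ih => exact sp (ih d)

theorem subst {M M' N N' : Tm} (h : ParE_s13 M M') (hN : ParE_s13 N N') (k : ℕ) :
    ParE_s13 (M.subst k N) (M'.subst k N') := by
  induction h generalizing N N' k with
  | var => simp only [Tm.subst]; split_ifs <;> first | exact hN | exact var
  | eta _ ih => rw [Tm.etaExpand_subst]; exact eta (ih hN k)
  | app _ _ ihM ihN => exact app (ihM hN k) (ihN hN k)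
  | lam _ ih => exact lam (ih (hN.lift 0) (k + 1))
  | pair _ _ ihM ihN => exact pair (ihM hN k) (ihN hN k)
  | p1 _ ih => exact p1 (ih hN k)
  | p2 _ ih => exact p2 (ih hN k)
  | sp _ ih => exact sp (ih hN k)

theorem exists_wrap {M N : Tm} (h : ParE_s13 M N) : ∃ s N₀, ParECong M N₀ ∧ N = N₀.wrap s := by
  induction h with
  | var => exact ⟨[], _, .var, rfl⟩
  | app hM hN => exact ⟨[], _, .app hM hN, rfl⟩
  | lam h => exact ⟨[], _, .lam h, rfl⟩
  | pair hM hN => exact ⟨[], _, .pair hM hN, rfl⟩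
  | p1 h => exact ⟨[], _, .p1 h, rfl⟩
  | p2 h => exact ⟨[], _, .p2 h, rfl⟩
  | eta _ ih =>
    obtain ⟨s, N₀, hc, rfl⟩ := ih
    exact ⟨true :: s, N₀, hc, rfl⟩
  | sp _ ih =>
    obtain ⟨s, N₀, hc, rfl⟩ := ih
    exact ⟨false :: s, N₀, hc, rfl⟩

theorem wrap_right {M N : Tm} (h : ParE_s13 M N) : ∀ s, ParE_s13 M (N.wrap s)
  | [] => h
  | true :: s => eta (wrap_right h s)
  | false :: s => sp (wrap_right h s)

theorem wrap {M N : Tm} (h : ParE_s13 M N) : ∀ s, ParE_s13 (M.wrap s) (N.wrap s)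
  | [] => h
  | true :: s => lam (app ((wrap h s).lift 0) var)
  | false :: s => pair (p1 (wrap h s)) (p2 (wrap h s))

theorem join_of_cong {M Q R : Tm} (hQ : ParE_s13 M Q) (hR : ParE_s13 M R)
    (h : ∀ Q₀ R₀, ParECong M Q₀ → ParECong M R₀ → Join ParE_s13 Q₀ R₀) : Join ParE_s13 Q R := by
  obtain ⟨s, Q₀, hQ₀, rfl⟩ := hQ.exists_wrap
  obtain ⟨t, R₀, hR₀, rfl⟩ := hR.exists_wrap
  obtain ⟨P, hQP, hRP⟩ := h Q₀ R₀ hQ₀ hR₀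
  exact ⟨(P.wrap t).wrap s, (hQP.wrap_right t).wrap s, (hRP.wrap t).wrap_right s⟩

theorem diamond {M Q R : Tm} (hQ : ParE_s13 M Q) (hR : ParE_s13 M R) : Join ParE_s13 Q R := by
  induction M generalizing Q R with
  | var =>
    refine hQ.join_of_cong hR fun Q₀ R₀ hQ₀ hR₀ ↦ ?_
    cases hQ₀; cases hR₀
    exact ⟨_, var, var⟩
  | app _ _ ihF ihC =>
    refine hQ.join_of_cong hR fun Q₀ R₀ hQ₀ hR₀ ↦ ?_
    cases hQ₀ with | app hF₁ hC₁ =>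
    cases hR₀ with | app hF₂ hC₂ =>
    obtain ⟨PF, hPF₁, hPF₂⟩ := ihF hF₁ hF₂
    obtain ⟨PC, hPC₁, hPC₂⟩ := ihC hC₁ hC₂
    exact ⟨.app PF PC, app hPF₁ hPC₁, app hPF₂ hPC₂⟩
  | lam _ ih =>
    refine hQ.join_of_cong hR fun Q₀ R₀ hQ₀ hR₀ ↦ ?_
    cases hQ₀ with | lam hA₁ =>
    cases hR₀ with | lam hA₂ =>
    obtain ⟨PA, hPA₁, hPA₂⟩ := ih hA₁ hA₂
    exact ⟨.lam PA, lam hPA₁, lam hPA₂⟩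
  | pair _ _ ihU ihV =>
    refine hQ.join_of_cong hR fun Q₀ R₀ hQ₀ hR₀ ↦ ?_
    cases hQ₀ with | pair hU₁ hV₁ =>
    cases hR₀ with | pair hU₂ hV₂ =>
    obtain ⟨PU, hPU₁, hPU₂⟩ := ihU hU₁ hU₂
    obtain ⟨PV, hPV₁, hPV₂⟩ := ihV hV₁ hV₂
    exact ⟨.pair PU PV, pair hPU₁ hPV₁, pair hPU₂ hPV₂⟩
  | p1 _ ih =>
    refine hQ.join_of_cong hR fun Q₀ R₀ hQ₀ hR₀ ↦ ?_
    cases hQ₀ with | p1 hF₁ =>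
    cases hR₀ with | p1 hF₂ =>
    obtain ⟨PF, hPF₁, hPF₂⟩ := ih hF₁ hF₂
    exact ⟨.p1 PF, p1 hPF₁, p1 hPF₂⟩
  | p2 _ ih =>
    refine hQ.join_of_cong hR fun Q₀ R₀ hQ₀ hR₀ ↦ ?_
    cases hQ₀ with | p2 hF₁ =>
    cases hR₀ with | p2 hF₂ =>
    obtain ⟨PF, hPF₁, hPF₂⟩ := ih hF₁ hF₂
    exact ⟨.p2 PF, p2 hPF₁, p2 hPF₂⟩

end ParE_s13

abbrev RedB : Tm → Tm → Prop := ReflTransGen ParB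

namespace RedB

variable {A C M M' N N' Q R U V W X Y : Tm}

theorem app (hM : RedB M M') (hN : RedB N N') : RedB (.app M N) (.app M' N') :=
  (ReflTransGen.lift (Tm.app · N) (fun _ _ h ↦ ParB.app h (.refl N)) _ _ hM).trans
    (ReflTransGen.lift (Tm.app M') (fun _ _ h ↦ ParB.app (.refl M') h) _ _ hN)

theorem pair (hM : RedB M M') (hN : RedB N N') : RedB (.pair M N) (.pair M' N') :=
  (ReflTransGen.lift (Tm.pair · N) (fun _ _ h ↦ ParB.pair h (.refl N)) _ _ hM).trans
    (ReflTransGen.lift (Tm.pair M') (fun _ _ h ↦ ParB.pair (.refl M') h) _ _ hN)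

theorem lam (h : RedB M M') : RedB (.lam M) (.lam M') :=
  ReflTransGen.lift Tm.lam (fun _ _ ↦ ParB.lam) _ _ h

theorem p1 (h : RedB M M') : RedB (.p1 M) (.p1 M') :=
  ReflTransGen.lift Tm.p1 (fun _ _ ↦ ParB.p1) _ _ h

theorem p2 (h : RedB M M') : RedB (.p2 M) (.p2 M') :=
  ReflTransGen.lift Tm.p2 (fun _ _ ↦ ParB.p2) _ _ h

theorem lift (h : RedB M M') (d : ℕ) : RedB (M.lift d) (M'.lift d) :=
  ReflTransGen.lift (Tm.lift d) (fun _ _ h ↦ h.lift d) _ _ h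

theorem wrap (h : RedB M M') : ∀ s, RedB (M.wrap s) (M'.wrap s)
  | [] => h
  | true :: s => lam (app ((wrap h s).lift 0) .refl)
  | false :: s => pair (p1 (wrap h s)) (p2 (wrap h s))

theorem beta : RedB (.app (.lam A) C) (A.subst 0 C) := .single (.beta (.refl A) (.refl C))

theorem pi1 : RedB (.p1 (.pair U V)) U := .single (.pi1 (.refl U))

theorem pi2 : RedB (.p2 (.pair U V)) V := .single (.pi2 (.refl V))

theorem dpi : RedB (.app (.pair U V) W) (.pair (.app U W) (.app V W)) :=
  .single (.dpi (.refl U) (.refl V) (.refl W))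

theorem pi1lam : RedB (.p1 (.lam A)) (.lam (.p1 A)) := .single (.pi1lam (.refl A))

theorem pi2lam : RedB (.p2 (.lam A)) (.lam (.p2 A)) := .single (.pi2lam (.refl A))

theorem app_p1_lam : RedB (.app (.p1 (.lam A)) C) (.p1 (A.subst 0 C)) :=
  (app pi1lam .refl).trans beta

theorem app_p2_lam : RedB (.app (.p2 (.lam A)) C) (.p2 (A.subst 0 C)) :=
  (app pi2lam .refl).trans beta

theorem app_etaExpand : RedB (.app M.etaExpand N) (.app M N) :=
  Tm.subst_etaExpand_body M N ▸ beta

theorem app_p1_etaExpand : RedB (.app (.p1 M.etaExpand) N) (.p1 (.app M N)) :=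
  Tm.subst_etaExpand_body M N ▸ app_p1_lam

theorem app_p2_etaExpand : RedB (.app (.p2 M.etaExpand) N) (.p2 (.app M N)) :=
  Tm.subst_etaExpand_body M N ▸ app_p2_lam

theorem app_wrap_pair (s : List Bool) :
    RedB (.app ((Tm.pair X Y).wrap s) Q) (.pair (.app X Q) (.app Y Q)) ∧
      RedB (.app (.p1 ((Tm.pair X Y).wrap s)) Q) (.app X Q) ∧
      RedB (.app (.p2 ((Tm.pair X Y).wrap s)) Q) (.app Y Q) := by
  induction s with
  | nil => exact ⟨dpi, app pi1 .refl, app pi2 .refl⟩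
  | cons b s ih =>
    obtain ⟨h, h₁, h₂⟩ := ih
    cases b
    · exact ⟨dpi.trans (pair h₁ h₂), (app pi1 .refl).trans h₁, (app pi2 .refl).trans h₂⟩
    · exact ⟨app_etaExpand.trans h, app_p1_etaExpand.trans ((p1 h).trans pi1),
        app_p2_etaExpand.trans ((p2 h).trans pi2)⟩

/-- The projections are tracked as well because under an (S̄P)-wrap the application becomes a pair
of applied projections, and re-expanding that pair by (S̄P) needs one common `R'`. -/
theorem exists_app_wrap_lam (s : List Bool) (h : ParE_s13 R (X.subst 0 Q)) :
    ∃ P R', ParE_s13 R P ∧ ParE_s13 R R' ∧ RedB (.app ((Tm.lam X).wrap s) Q) P ∧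
      RedB (.app (.p1 ((Tm.lam X).wrap s)) Q) (.p1 R') ∧
      RedB (.app (.p2 ((Tm.lam X).wrap s)) Q) (.p2 R') := by
  induction s with
  | nil => exact ⟨_, _, h, h, beta, app_p1_lam, app_p2_lam⟩
  | cons b s ih =>
    obtain ⟨P, R', hP, hR', hred, hred₁, hred₂⟩ := ih
    cases b
    · exact ⟨_, R', .sp hR', hR', dpi.trans (pair hred₁ hred₂), (app pi1 .refl).trans hred₁,
        (app pi2 .refl).trans hred₂⟩
    · exact ⟨P, P, hP, hP, app_etaExpand.trans hred, app_p1_etaExpand.trans (p1 hred),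
        app_p2_etaExpand.trans (p2 hred)⟩

theorem exists_p1_wrap_pair (s : List Bool) (h : ParE_s13 R X) :
    ∃ P, RedB (.p1 ((Tm.pair X Y).wrap s)) P ∧ ParE_s13 R P := by
  induction s with
  | nil => exact ⟨X, pi1, h⟩
  | cons b s ih =>
    cases b
    · obtain ⟨P, hred, hP⟩ := ih
      exact ⟨P, pi1.trans hred, hP⟩
    · refine ⟨X.etaExpand, pi1lam.trans (lam ?_), .eta h⟩
      rw [Tm.wrap_lift_zero]
      exact (p1 (app_wrap_pair s).1).trans pi1

theorem exists_p2_wrap_pair (s : List Bool) (h : ParE_s13 R Y) :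
    ∃ P, RedB (.p2 ((Tm.pair X Y).wrap s)) P ∧ ParE_s13 R P := by
  induction s with
  | nil => exact ⟨Y, pi2, h⟩
  | cons b s ih =>
    cases b
    · obtain ⟨P, hred, hP⟩ := ih
      exact ⟨P, pi2.trans hred, hP⟩
    · refine ⟨Y.etaExpand, pi2lam.trans (lam ?_), .eta h⟩
      rw [Tm.wrap_lift_zero]
      exact (p2 (app_wrap_pair s).1).trans pi2

theorem exists_p1_wrap_lam (s : List Bool) (h : ParE_s13 R X) :
    ∃ P, RedB (.p1 ((Tm.lam X).wrap s)) P ∧ ParE_s13 (.lam (.p1 R)) P := by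
  induction s with
  | nil => exact ⟨_, pi1lam, .lam (.p1 h)⟩
  | cons b s ih =>
    cases b
    · obtain ⟨P, hred, hP⟩ := ih
      exact ⟨P, pi1.trans hred, hP⟩
    · -- under the η̄-wrap, `(lam X).wrap s` is lifted and applied to the bound variable
      obtain ⟨P, -, hP, -, hred, -⟩ :=
        exists_app_wrap_lam (X := X.lift 1) (Q := .var 0) s (by rwa [Tm.subst_lift_succ_var])
      refine ⟨.lam (.p1 P), pi1lam.trans (lam (p1 ?_)), .lam (.p1 hP)⟩
      rwa [Tm.wrap_lift_zero]

theorem exists_p2_wrap_lam (s : List Bool) (h : ParE_s13 R X) :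
    ∃ P, RedB (.p2 ((Tm.lam X).wrap s)) P ∧ ParE_s13 (.lam (.p2 R)) P := by
  induction s with
  | nil => exact ⟨_, pi2lam, .lam (.p2 h)⟩
  | cons b s ih =>
    cases b
    · obtain ⟨P, hred, hP⟩ := ih
      exact ⟨P, pi2.trans hred, hP⟩
    · obtain ⟨P, -, hP, -, hred, -⟩ :=
        exists_app_wrap_lam (X := X.lift 1) (Q := .var 0) s (by rwa [Tm.subst_lift_succ_var])
      refine ⟨.lam (.p2 P), pi2lam.trans (lam (p2 ?_)), .lam (.p2 hP)⟩
      rwa [Tm.wrap_lift_zero]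

end RedB

def CommutesWithParE (M N : Tm) : Prop := ∀ ⦃Q⦄, ParE_s13 M Q → ∃ P, ParE_s13 N P ∧ RedB Q P

namespace CommutesWithParE

variable {A A' C C' M M' N N' U U' V V' W W' : Tm}

theorem of_cong (h : ∀ Q, ParECong M Q → ∃ P, ParE_s13 N P ∧ RedB Q P) : CommutesWithParE M N := by
  intro Q hQ
  obtain ⟨s, Q₀, hQ₀, rfl⟩ := hQ.exists_wrap
  obtain ⟨P, hNP, hQP⟩ := h Q₀ hQ₀
  exact ⟨P.wrap s, hNP.wrap_right s, hQP.wrap s⟩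

theorem var (n : ℕ) : CommutesWithParE (.var n) (.var n) := of_cong fun _ hQ ↦ by
  cases hQ
  exact ⟨_, .var, .refl⟩

theorem app (hM : CommutesWithParE M M') (hN : CommutesWithParE N N') :
    CommutesWithParE (.app M N) (.app M' N') := of_cong fun _ hQ ↦ by
  cases hQ with | app hM₂ hN₂ =>
  obtain ⟨PM, hPM, hredM⟩ := hM hM₂
  obtain ⟨PN, hPN, hredN⟩ := hN hN₂
  exact ⟨.app PM PN, .app hPM hPN, hredM.app hredN⟩

theorem lam (h : CommutesWithParE M M') : CommutesWithParE (.lam M) (.lam M') :=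
  of_cong fun _ hQ ↦ by
    cases hQ with | lam hM₂ =>
    obtain ⟨P, hP, hred⟩ := h hM₂
    exact ⟨.lam P, .lam hP, hred.lam⟩

theorem pair (hM : CommutesWithParE M M') (hN : CommutesWithParE N N') :
    CommutesWithParE (.pair M N) (.pair M' N') := of_cong fun _ hQ ↦ by
  cases hQ with | pair hM₂ hN₂ =>
  obtain ⟨PM, hPM, hredM⟩ := hM hM₂
  obtain ⟨PN, hPN, hredN⟩ := hN hN₂
  exact ⟨.pair PM PN, .pair hPM hPN, hredM.pair hredN⟩

theorem p1 (h : CommutesWithParE M M') : CommutesWithParE (.p1 M) (.p1 M') :=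
  of_cong fun _ hQ ↦ by
    cases hQ with | p1 hM₂ =>
    obtain ⟨P, hP, hred⟩ := h hM₂
    exact ⟨.p1 P, .p1 hP, hred.p1⟩

theorem p2 (h : CommutesWithParE M M') : CommutesWithParE (.p2 M) (.p2 M') :=
  of_cong fun _ hQ ↦ by
    cases hQ with | p2 hM₂ =>
    obtain ⟨P, hP, hred⟩ := h hM₂
    exact ⟨.p2 P, .p2 hP, hred.p2⟩

theorem beta (hA : CommutesWithParE A A') (hC : CommutesWithParE C C') :
    CommutesWithParE (.app (.lam A) C) (A'.subst 0 C') := of_cong fun _ hQ ↦ by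
  cases hQ with | app hF hC₂ =>
  obtain ⟨t, F₀, hF₀, rfl⟩ := hF.exists_wrap
  cases hF₀ with | lam hA₂ =>
  obtain ⟨PA, hPA, hredA⟩ := hA hA₂
  obtain ⟨PC, hPC, hredC⟩ := hC hC₂
  obtain ⟨P, -, hP, -, hred, -⟩ := RedB.exists_app_wrap_lam t (hPA.subst hPC 0)
  exact ⟨P, hP, (hredA.lam.wrap t |>.app hredC).trans hred⟩

theorem dpi (hU : CommutesWithParE U U') (hV : CommutesWithParE V V')
    (hW : CommutesWithParE W W') :
    CommutesWithParE (.app (.pair U V) W) (.pair (.app U' W') (.app V' W')) :=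
  of_cong fun _ hQ ↦ by
    cases hQ with | app hF hW₂ =>
    obtain ⟨t, F₀, hF₀, rfl⟩ := hF.exists_wrap
    cases hF₀ with | pair hU₂ hV₂ =>
    obtain ⟨PU, hPU, hredU⟩ := hU hU₂
    obtain ⟨PV, hPV, hredV⟩ := hV hV₂
    obtain ⟨PW, hPW, hredW⟩ := hW hW₂
    exact ⟨.pair (.app PU PW) (.app PV PW), .pair (.app hPU hPW) (.app hPV hPW),
      ((hredU.pair hredV).wrap t |>.app hredW).trans (RedB.app_wrap_pair t).1⟩

theorem pi1 (hU : CommutesWithParE U U') : CommutesWithParE (.p1 (.pair U V)) U' :=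
  of_cong fun _ hQ ↦ by
    cases hQ with | p1 hF =>
    obtain ⟨t, F₀, hF₀, rfl⟩ := hF.exists_wrap
    cases hF₀ with | pair hU₂ _ =>
    obtain ⟨PU, hPU, hredU⟩ := hU hU₂
    obtain ⟨P, hred, hP⟩ := RedB.exists_p1_wrap_pair t hPU
    exact ⟨P, hP, ((hredU.pair .refl).wrap t).p1.trans hred⟩

theorem pi2 (hV : CommutesWithParE V V') : CommutesWithParE (.p2 (.pair U V)) V' :=
  of_cong fun _ hQ ↦ by
    cases hQ with | p2 hF =>
    obtain ⟨t, F₀, hF₀, rfl⟩ := hF.exists_wrap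
    cases hF₀ with | pair _ hV₂ =>
    obtain ⟨PV, hPV, hredV⟩ := hV hV₂
    obtain ⟨P, hred, hP⟩ := RedB.exists_p2_wrap_pair t hPV
    exact ⟨P, hP, ((RedB.pair .refl hredV).wrap t).p2.trans hred⟩

theorem pi1lam (hA : CommutesWithParE A A') : CommutesWithParE (.p1 (.lam A)) (.lam (.p1 A')) :=
  of_cong fun _ hQ ↦ by
    cases hQ with | p1 hF =>
    obtain ⟨t, F₀, hF₀, rfl⟩ := hF.exists_wrap
    cases hF₀ with | lam hA₂ =>
    obtain ⟨PA, hPA, hredA⟩ := hA hA₂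
    obtain ⟨P, hred, hP⟩ := RedB.exists_p1_wrap_lam t hPA
    exact ⟨P, hP, (hredA.lam.wrap t).p1.trans hred⟩

theorem pi2lam (hA : CommutesWithParE A A') : CommutesWithParE (.p2 (.lam A)) (.lam (.p2 A')) :=
  of_cong fun _ hQ ↦ by
    cases hQ with | p2 hF =>
    obtain ⟨t, F₀, hF₀, rfl⟩ := hF.exists_wrap
    cases hF₀ with | lam hA₂ =>
    obtain ⟨PA, hPA, hredA⟩ := hA hA₂
    obtain ⟨P, hred, hP⟩ := RedB.exists_p2_wrap_lam t hPA
    exact ⟨P, hP, (hredA.lam.wrap t).p2.trans hred⟩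

end CommutesWithParE

theorem ParB.commutesWithParE {M N : Tm} (h : ParB M N) : CommutesWithParE M N := by
  induction h with
  | var => exact .var _
  | app _ _ ihM ihN => exact ihM.app ihN
  | lam _ ih => exact ih.lam
  | pair _ _ ihM ihN => exact ihM.pair ihN
  | p1 _ ih => exact ih.p1
  | p2 _ ih => exact ih.p2
  | beta _ _ ihA ihC => exact ihA.beta ihC
  | pi1 _ ih => exact ih.pi1
  | pi2 _ ih => exact ih.pi2
  | dpi _ _ _ ihU ihV ihW => exact ihU.dpi ihV ihW
  | pi1lam _ ih => exact ih.pi1lam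
  | pi2lam _ ih => exact ih.pi2lam

theorem StepFP.parB_or_parE {M N : Tm} (h : StepFP M N) : ParB M N ∨ ParE_s13 M N := by
  induction h with
  | beta => exact .inl (.beta (.refl _) (.refl _))
  | eta => exact .inr (.eta (.refl _))
  | pi1 => exact .inl (.pi1 (.refl _))
  | pi2 => exact .inl (.pi2 (.refl _))
  | sp => exact .inr (.sp (.refl _))
  | dpi => exact .inl (.dpi (.refl _) (.refl _) (.refl _))
  | pi1lam => exact .inl (.pi1lam (.refl _))
  | pi2lam => exact .inl (.pi2lam (.refl _))
  | lam _ ih => exact ih.imp .lam .lam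
  | appL _ ih => exact ih.imp (.app · (.refl _)) (.app · (.refl _))
  | appR _ ih => exact ih.imp (.app (.refl _)) (.app (.refl _))
  | pairL _ ih => exact ih.imp (.pair · (.refl _)) (.pair · (.refl _))
  | pairR _ ih => exact ih.imp (.pair (.refl _)) (.pair (.refl _))
  | p1 _ ih => exact ih.imp .p1 .p1
  | p2 _ ih => exact ih.imp .p2 .p2

abbrev RedFP : Tm → Tm → Prop := ReflTransGen StepFP

namespace RedFP

variable {M M' N N' : Tm}

theorem app (hM : RedFP M M') (hN : RedFP N N') : RedFP (.app M N) (.app M' N') :=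
  (ReflTransGen.lift (Tm.app · N) (fun _ _ ↦ StepFP.appL) _ _ hM).trans
    (ReflTransGen.lift (Tm.app M') (fun _ _ ↦ StepFP.appR) _ _ hN)

theorem pair (hM : RedFP M M') (hN : RedFP N N') : RedFP (.pair M N) (.pair M' N') :=
  (ReflTransGen.lift (Tm.pair · N) (fun _ _ ↦ StepFP.pairL) _ _ hM).trans
    (ReflTransGen.lift (Tm.pair M') (fun _ _ ↦ StepFP.pairR) _ _ hN)

theorem lam (h : RedFP M M') : RedFP (.lam M) (.lam M') :=
  ReflTransGen.lift Tm.lam (fun _ _ ↦ StepFP.lam) _ _ h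

theorem p1 (h : RedFP M M') : RedFP (.p1 M) (.p1 M') :=
  ReflTransGen.lift Tm.p1 (fun _ _ ↦ StepFP.p1) _ _ h

theorem p2 (h : RedFP M M') : RedFP (.p2 M) (.p2 M') :=
  ReflTransGen.lift Tm.p2 (fun _ _ ↦ StepFP.p2) _ _ h

end RedFP

theorem ParB.redFP {M N : Tm} (h : ParB M N) : RedFP M N := by
  induction h with
  | var => exact .refl
  | app _ _ ihM ihN => exact ihM.app ihN
  | lam _ ih => exact ih.lam
  | pair _ _ ihM ihN => exact ihM.pair ihN
  | p1 _ ih => exact ih.p1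
  | p2 _ ih => exact ih.p2
  | beta _ _ ihA ihC => exact (ihA.lam.app ihC).tail .beta
  | pi1 _ ih => exact (ih.pair .refl).p1.tail .pi1
  | pi2 _ ih => exact (RedFP.pair .refl ih).p2.tail .pi2
  | dpi _ _ _ ihU ihV ihW => exact ((ihU.pair ihV).app ihW).tail .dpi
  | pi1lam _ ih => exact ih.lam.p1.tail .pi1lam
  | pi2lam _ ih => exact ih.lam.p2.tail .pi2lam

theorem ParE_s13.redFP {M N : Tm} (h : ParE_s13 M N) : RedFP M N := by
  induction h with
  | var => exact .refl
  | app _ _ ihM ihN => exact ihM.app ihN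
  | lam _ ih => exact ih.lam
  | pair _ _ ihM ihN => exact ihM.pair ihN
  | p1 _ ih => exact ih.p1
  | p2 _ ih => exact ih.p2
  | eta _ ih => exact ih.tail .eta
  | sp _ ih => exact ih.tail .sp

/-- The reduction relation →_FP is confluent. -/
theorem stepFP_confluent (M N₁ N₂ : Tm)
    (h₁ : Relation.ReflTransGen StepFP M N₁) (h₂ : Relation.ReflTransGen StepFP M N₂) :
    ∃ P, Relation.ReflTransGen StepFP N₁ P ∧ Relation.ReflTransGen StepFP N₂ P :=
  join_reflTransGen_of_commute (fun _ _ _ ↦ ParB.diamond) (fun _ _ _ ↦ ParE_s13.diamond)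
    (fun _ _ _ hB hE ↦ hB.commutesWithParE hE) (fun _ _ ↦ StepFP.parB_or_parE)
    (fun _ _ ↦ ParB.redFP) (fun _ _ ↦ ParE_s13.redFP) h₁ h₂
end
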